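/- Let q₀ > 0, Q₁, B, B', c₁ ≥ 0 and μ ≥ max(1, B²/(2q₀), 5(Q₁² + B²)/q₀). Let q̃ : ℝ² → ℝ, c : ℝ² → ℝ and b : ℝ² → ℝ² be C^∞ with q̃(x) ≥ q₀, |∇q̃(x)| ≤ Q₁, 0 ≤ c(x) ≤ c₁, |b(x)| ≤ B and |∇·b(x)| ≤ B' for all x ∈ ℝ². Let w : ℝ² → ℝ be C^∞ with compact support and define g(x) := −∇·(q̃(x)∇w(x)) + ∇·(b(x)·w(x)) + c(x)·w(x) + μ·w(x). Then ∫_{ℝ²} |∇w|² dx ≤ (5(1 + 4(B'² + c₁²))/(q₀·μ))·∫_{ℝ²} g² dx. -/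

import Mathlib

set_option maxHeartbeats 1000000
noncomputable section
open MeasureTheory Real

local notation "E2" => EuclideanSpace ℝ (Fin 2)

/-- Divergence of a vector field on ℝ². -/
def vdiv (b : EuclideanSpace ℝ (Fin 2) → EuclideanSpace ℝ (Fin 2))
    (x : EuclideanSpace ℝ (Fin 2)) : ℝ :=
  ∑ i : Fin 2, fderiv ℝ b x (EuclideanSpace.single i 1) i

lemma inner_gradient_eq (f : E2 → ℝ) (x v : E2) :
    (inner ℝ (gradient f x) v : ℝ) = fderiv ℝ f x v := by
  rw [gradient]
  exact InnerProductSpace.toDual_symm_apply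

lemma gradient_eq_comp (f : E2 → ℝ) :
    gradient f = fun x => (InnerProductSpace.toDual ℝ E2).symm (fderiv ℝ f x) := rfl

lemma contDiff_gradient (f : E2 → ℝ) (hf : ContDiff ℝ (⊤ : ℕ∞) f) :
    ContDiff ℝ (⊤ : ℕ∞) (gradient f) := by
  rw [gradient_eq_comp]
  exact (InnerProductSpace.toDual ℝ E2).symm.contDiff.comp (hf.fderiv_right (by simp))

lemma hasCompactSupport_gradient (f : E2 → ℝ) (hf : HasCompactSupport f) :
    HasCompactSupport (gradient f) := by
  rw [gradient_eq_comp]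
  exact (hf.fderiv ℝ).comp_left (by simp)

lemma fderiv_single_eq (f : E2 → ℝ) (x : E2) (i : Fin 2) :
    fderiv ℝ f x (EuclideanSpace.single i 1) = gradient f x i := by
  rw [← inner_gradient_eq, EuclideanSpace.inner_single_right]
  simp

lemma vdiv_smul (f : E2 → ℝ) (F : E2 → E2) (hf : Differentiable ℝ f)
    (hF : Differentiable ℝ F) (x : E2) :
    vdiv (fun y => f y • F y) x =
      (inner ℝ (gradient f x) (F x) : ℝ) + f x * vdiv F x := by
  unfold vdiv
  have h : ∀ v : E2, fderiv ℝ (fun y => f y • F y) x v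
      = f x • fderiv ℝ F x v + (fderiv ℝ f x v) • F x := by
    intro v
    rw [fderiv_fun_smul (hf x) (hF x)]
    simp
  simp_rw [h]
  have : ∀ i : Fin 2,
      (f x • fderiv ℝ F x (EuclideanSpace.single i 1)
        + (fderiv ℝ f x (EuclideanSpace.single i 1)) • F x) i
      = f x * fderiv ℝ F x (EuclideanSpace.single i 1) i
        + gradient f x i * F x i := by
    intro i
    simp [fderiv_single_eq f x i, PiLp.add_apply, PiLp.smul_apply, smul_eq_mul]
  simp_rw [this, Finset.sum_add_distrib, ← Finset.mul_sum]
  rw [PiLp.inner_apply]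
  simp [mul_comm]
  ring

lemma continuous_fderiv_apply (f : E2 → ℝ) (hf : ContDiff ℝ (⊤ : ℕ∞) f) (v : E2) :
    Continuous (fun x => fderiv ℝ f x v) :=
  (hf.continuous_fderiv (by simp)).clm_apply continuous_const

lemma integral_fderiv_apply_eq_zero (f : E2 → ℝ) (hf : ContDiff ℝ (⊤ : ℕ∞) f)
    (hsupp : HasCompactSupport f) (v : E2) :
    ∫ x, fderiv ℝ f x v = 0 := by
  have hcont : Continuous (fun x => fderiv ℝ f x v) := continuous_fderiv_apply f hf v
  have hcs : HasCompactSupport (fun x => fderiv ℝ f x v) := hsupp.fderiv_apply ℝ v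
  have h := integral_mul_fderiv_eq_neg_fderiv_mul_of_integrable
    (μ := (volume : Measure E2)) (f := fun _ : E2 => (1:ℝ)) (g := f) (v := v)
    ?_ ?_ ?_ ?_ ?_
  · simpa using h
  · simpa using (integrable_zero E2 ℝ (volume : Measure E2))
  · simpa using hcont.integrable_of_hasCompactSupport hcs
  · simpa using hf.continuous.integrable_of_hasCompactSupport hsupp
  · exact fun x _ => differentiable_const 1 x
  · exact fun x _ => hf.differentiable (by simp) x

lemma coord_fderiv (F : E2 → E2) (hF : Differentiable ℝ F) (i : Fin 2) (x v : E2) :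
    fderiv ℝ (fun y => F y i) x v = fderiv ℝ F x v i := by
  have : (fun y => F y i) = (EuclideanSpace.proj (𝕜 := ℝ) i) ∘ F := rfl
  rw [this, fderiv_comp x (ContinuousLinearMap.differentiableAt _) (hF x)]
  rw [ContinuousLinearMap.fderiv]
  rfl

lemma contDiff_coord (F : E2 → E2) (hF : ContDiff ℝ (⊤ : ℕ∞) F) (i : Fin 2) :
    ContDiff ℝ (⊤ : ℕ∞) (fun y => F y i) :=
  (EuclideanSpace.proj (𝕜 := ℝ) i).contDiff.comp hF

lemma integral_vdiv_eq_zero (F : E2 → E2) (hF : ContDiff ℝ (⊤ : ℕ∞) F)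
    (hsupp : HasCompactSupport F) :
    ∫ x, vdiv F x = 0 := by
  have hcoord : ∀ i : Fin 2, ContDiff ℝ (⊤ : ℕ∞) (fun y => F y i) := contDiff_coord F hF
  have hsupp' : ∀ i : Fin 2, HasCompactSupport (fun y => F y i) := by
    intro i
    exact hsupp.comp_left (g := fun u : E2 => u i) rfl
  have key : ∀ i : Fin 2, ∀ x : E2, fderiv ℝ F x (EuclideanSpace.single i 1) i
      = fderiv ℝ (fun y => F y i) x (EuclideanSpace.single i 1) := by
    intro i x
    rw [coord_fderiv F (hF.differentiable (by simp)) i]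
  unfold vdiv
  rw [integral_finset_sum]
  · refine Finset.sum_eq_zero fun i _ => ?_
    simp_rw [key i]
    exact integral_fderiv_apply_eq_zero _ (hcoord i) (hsupp' i) _
  · intro i _
    simp_rw [key i]
    exact (continuous_fderiv_apply _ (hcoord i) _).integrable_of_hasCompactSupport
      ((hsupp' i).fderiv_apply ℝ _)

lemma continuous_vdiv (F : E2 → E2) (hF : ContDiff ℝ (⊤ : ℕ∞) F) : Continuous (vdiv F) := by
  unfold vdiv
  exact continuous_finset_sum _ fun i _ =>
    (EuclideanSpace.proj (𝕜 := ℝ) i).continuous.comp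
      ((hF.continuous_fderiv (by simp)).clm_apply continuous_const)

lemma hasCompactSupport_vdiv (F : E2 → E2) (hsupp : HasCompactSupport F) :
    HasCompactSupport (vdiv F) :=
  (hsupp.fderiv ℝ).comp_left
    (g := fun L : E2 →L[ℝ] E2 => ∑ i : Fin 2, L (EuclideanSpace.single i 1) i) (by simp)

lemma vdiv_eq_zero_of_nmem_tsupport (F : E2 → E2) (x : E2) (hx : x ∉ tsupport F) :
    vdiv F x = 0 := by
  unfold vdiv
  rw [fderiv_of_notMem_tsupport ℝ hx]
  simp

lemma integrable_of_K {K : Set E2} (hK : IsCompact K) {f : E2 → ℝ} (hf : Continuous f)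
    (h0 : ∀ x ∉ K, f x = 0) : Integrable f :=
  hf.integrable_of_hasCompactSupport (HasCompactSupport.intro hK h0)

/-- H¹-seminorm bound for the elliptic assimilation error: if
`-∇·(q̃∇w) + ∇·(b w) + c w + μ w = g` on ℝ² with `q̃ ≥ q₀ > 0`, `|∇q̃| ≤ Q₁`, `0 ≤ c ≤ c₁`,
`|b| ≤ B`, `|∇·b| ≤ B'` and `μ ≥ max(1, B²/(2q₀), 5(Q₁²+B²)/q₀)`, then
`∫ |∇w|² ≤ (5(1+4(B'²+c₁²))/(q₀ μ)) ∫ g²`. -/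
theorem elliptic_assimilation_H1_bound
    (q₀ Q₁ B B' c₁ μ : ℝ) (hq₀ : 0 < q₀) (hQ₁ : 0 ≤ Q₁) (hB : 0 ≤ B) (hB' : 0 ≤ B')
    (hc₁ : 0 ≤ c₁)
    (hμ : max 1 (max (B ^ 2 / (2 * q₀)) (5 * (Q₁ ^ 2 + B ^ 2) / q₀)) ≤ μ)
    (q c : EuclideanSpace ℝ (Fin 2) → ℝ)
    (b : EuclideanSpace ℝ (Fin 2) → EuclideanSpace ℝ (Fin 2))
    (hq : ContDiff ℝ (⊤ : ℕ∞) q) (hc : ContDiff ℝ (⊤ : ℕ∞) c) (hb : ContDiff ℝ (⊤ : ℕ∞) b)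
    (hq_lb : ∀ x, q₀ ≤ q x) (hq_grad : ∀ x, ‖gradient q x‖ ≤ Q₁)
    (hc_nonneg : ∀ x, 0 ≤ c x) (hc_ub : ∀ x, c x ≤ c₁)
    (hb_bd : ∀ x, ‖b x‖ ≤ B) (hb_div : ∀ x, |vdiv b x| ≤ B')
    (w : EuclideanSpace ℝ (Fin 2) → ℝ) (hw : ContDiff ℝ (⊤ : ℕ∞) w) (hwsupp : HasCompactSupport w)
    (g : EuclideanSpace ℝ (Fin 2) → ℝ)
    (hg : ∀ x, g x =
      - vdiv (fun y => q y • gradient w y) x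
      + vdiv (fun y => w y • b y) x
      + c x * w x + μ * w x) :
    (∫ x, ‖gradient w x‖ ^ 2) ≤
      (5 * (1 + 4 * (B' ^ 2 + c₁ ^ 2)) / (q₀ * μ)) * ∫ x, (g x) ^ 2 := by
  set gw := gradient w with hgw_def
  have hwd : Differentiable ℝ w := hw.differentiable (by simp)
  have hgw_cd : ContDiff ℝ (⊤ : ℕ∞) gw := contDiff_gradient w hw
  have hgw_cont : Continuous gw := hgw_cd.continuous
  have hgw_supp : HasCompactSupport gw := hasCompactSupport_gradient w hwsupp
  -- μ facts
  have hμ1 : (1:ℝ) ≤ μ := le_trans (le_max_left _ _) hμ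
  have hμpos : 0 < μ := lt_of_lt_of_le one_pos hμ1
  have hμB : B ^ 2 / q₀ ≤ μ := by
    have h5 : 5 * (Q₁ ^ 2 + B ^ 2) / q₀ ≤ μ :=
      le_trans (le_trans (le_max_right _ _) (le_max_right _ _)) hμ
    have hnum : B ^ 2 ≤ 5 * (Q₁ ^ 2 + B ^ 2) := by nlinarith [sq_nonneg Q₁, sq_nonneg B]
    exact le_trans ((div_le_div_iff_of_pos_right hq₀).mpr hnum) h5
  -- fluxes
  set G1 : EuclideanSpace ℝ (Fin 2) → EuclideanSpace ℝ (Fin 2) := fun y => q y • gw y with hG1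
  set G2 : EuclideanSpace ℝ (Fin 2) → EuclideanSpace ℝ (Fin 2) := fun y => w y • b y with hG2
  have hG1cd : ContDiff ℝ (⊤ : ℕ∞) G1 := hq.smul hgw_cd
  have hG2cd : ContDiff ℝ (⊤ : ℕ∞) G2 := hw.smul hb
  have hG1d : Differentiable ℝ G1 := hG1cd.differentiable (by simp)
  have hG2d : Differentiable ℝ G2 := hG2cd.differentiable (by simp)
  set H1 : EuclideanSpace ℝ (Fin 2) → EuclideanSpace ℝ (Fin 2) := fun y => w y • G1 y with hH1
  set H2 : EuclideanSpace ℝ (Fin 2) → EuclideanSpace ℝ (Fin 2) := fun y => w y • G2 y with hH2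
  have hH1cd : ContDiff ℝ (⊤ : ℕ∞) H1 := hw.smul hG1cd
  have hH2cd : ContDiff ℝ (⊤ : ℕ∞) H2 := hw.smul hG2cd
  have hH1supp : HasCompactSupport H1 := by
    apply HasCompactSupport.intro hwsupp
    intro x hx
    simp [hH1, image_eq_zero_of_notMem_tsupport hx]
  have hH2supp : HasCompactSupport H2 := by
    apply HasCompactSupport.intro hwsupp
    intro x hx
    simp [hH2, image_eq_zero_of_notMem_tsupport hx]
  -- pointwise identity
  set T : EuclideanSpace ℝ (Fin 2) → ℝ := fun x =>
    q x * ‖gw x‖ ^ 2 - w x * (inner ℝ (gw x) (b x) : ℝ) + (c x + μ) * w x ^ 2 with hT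
  have hpoint : ∀ x, g x * w x = T x + (- vdiv H1 x + vdiv H2 x) := by
    intro x
    have e1 : vdiv H1 x = (inner ℝ (gw x) (G1 x) : ℝ) + w x * vdiv G1 x :=
      vdiv_smul w G1 hwd hG1d x
    have e2 : vdiv H2 x = (inner ℝ (gw x) (G2 x) : ℝ) + w x * vdiv G2 x :=
      vdiv_smul w G2 hwd hG2d x
    have i1 : (inner ℝ (gw x) (G1 x) : ℝ) = q x * ‖gw x‖ ^ 2 := by
      rw [hG1]
      simp only []
      rw [real_inner_smul_right, real_inner_self_eq_norm_sq]
    have i2 : (inner ℝ (gw x) (G2 x) : ℝ) = w x * (inner ℝ (gw x) (b x) : ℝ) := by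
      rw [hG2]
      simp only []
      rw [real_inner_smul_right]
    rw [hg x, hT]
    simp only []
    rw [e1, e2, i1, i2]
    ring
  -- support / integrability
  set K : Set (EuclideanSpace ℝ (Fin 2)) := tsupport w ∪ tsupport gw with hK
  have hKc : IsCompact K := hwsupp.union hgw_supp
  have hw0 : ∀ x ∉ K, w x = 0 := fun x hx =>
    image_eq_zero_of_notMem_tsupport (fun h => hx (Or.inl h))
  have hgw0 : ∀ x ∉ K, gw x = 0 := fun x hx =>
    image_eq_zero_of_notMem_tsupport (fun h => hx (Or.inr h))
  have hgcont : Continuous g := by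
    have hgfun : g = fun x => - vdiv G1 x + vdiv G2 x + c x * w x + μ * w x := funext hg
    rw [hgfun]
    exact (((continuous_vdiv _ hG1cd).neg.add (continuous_vdiv _ hG2cd)).add
      (hc.continuous.mul hw.continuous)).add (continuous_const.mul hw.continuous)
  have hg0 : ∀ x ∉ K, g x = 0 := by
    intro x hx
    have h1 : vdiv G1 x = 0 := by
      apply vdiv_eq_zero_of_nmem_tsupport
      intro hmem
      apply hx
      right
      refine closure_mono ?_ hmem
      intro y hy
      simp only [hG1, Function.mem_support, ne_eq] at hy ⊢
      intro h0
      exact hy (by rw [h0, smul_zero])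
    have h2 : vdiv G2 x = 0 := by
      apply vdiv_eq_zero_of_nmem_tsupport
      intro hmem
      apply hx
      left
      refine closure_mono ?_ hmem
      intro y hy
      simp only [hG2, Function.mem_support, ne_eq] at hy ⊢
      intro h0
      exact hy (by rw [h0, zero_smul])
    rw [hg x, h1, h2, hw0 x hx]
    ring
  have intE : Integrable (fun x => ‖gw x‖ ^ 2) := by
    refine integrable_of_K hKc (hgw_cont.norm.pow 2) fun x hx => by rw [hgw0 x hx]; simp
  have intW2 : Integrable (fun x => w x ^ 2) := by
    refine integrable_of_K hKc (hw.continuous.pow 2) fun x hx => by rw [hw0 x hx]; ring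
  have intG2 : Integrable (fun x => g x ^ 2) := by
    refine integrable_of_K hKc (hgcont.pow 2) fun x hx => by rw [hg0 x hx]; ring
  have intGW : Integrable (fun x => g x * w x) := by
    refine integrable_of_K hKc (hgcont.mul hw.continuous) fun x hx => by rw [hw0 x hx]; ring
  have intT : Integrable T := by
    refine integrable_of_K hKc ?_ fun x hx => ?_
    · exact ((hq.continuous.mul (hgw_cont.norm.pow 2)).sub
        (hw.continuous.mul (hgw_cont.inner hb.continuous))).add
        ((hc.continuous.add continuous_const).mul (hw.continuous.pow 2))
    · rw [hT]
      simp only []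
      rw [hw0 x hx, hgw0 x hx]
      simp
  have intVH1 : Integrable (vdiv H1) :=
    (continuous_vdiv _ hH1cd).integrable_of_hasCompactSupport (hasCompactSupport_vdiv _ hH1supp)
  have intVH2 : Integrable (vdiv H2) :=
    (continuous_vdiv _ hH2cd).integrable_of_hasCompactSupport (hasCompactSupport_vdiv _ hH2supp)
  -- integral identity
  have hID : ∫ x, g x * w x = ∫ x, T x := by
    calc ∫ x, g x * w x = ∫ x, (T x + (- vdiv H1 x + vdiv H2 x)) := by
          exact integral_congr_ae (Filter.Eventually.of_forall hpoint)
      _ = (∫ x, T x) + ((- ∫ x, vdiv H1 x) + ∫ x, vdiv H2 x) := by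
          have intN : Integrable (fun x => - vdiv H1 x) (volume : Measure (EuclideanSpace ℝ (Fin 2))) := intVH1.neg
          have intD : Integrable (fun x => - vdiv H1 x + vdiv H2 x) (volume : Measure (EuclideanSpace ℝ (Fin 2))) := intN.add intVH2
          rw [integral_add intT intD, integral_add intN intVH2, integral_neg]
      _ = ∫ x, T x := by
          rw [integral_vdiv_eq_zero H1 hH1cd hH1supp, integral_vdiv_eq_zero H2 hH2cd hH2supp]
          ring
  -- pointwise lower bound for T
  have hlowpt : ∀ x, q₀ / 2 * ‖gw x‖ ^ 2 + μ / 2 * w x ^ 2 ≤ T x := by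
    intro x
    have h1 : q₀ * ‖gw x‖ ^ 2 ≤ q x * ‖gw x‖ ^ 2 :=
      mul_le_mul_of_nonneg_right (hq_lb x) (sq_nonneg _)
    have h2 : 0 ≤ c x * w x ^ 2 := mul_nonneg (hc_nonneg x) (sq_nonneg _)
    have h3 : w x * (inner ℝ (gw x) (b x) : ℝ) ≤ B * (|w x| * ‖gw x‖) := by
      calc w x * (inner ℝ (gw x) (b x) : ℝ) ≤ |w x * (inner ℝ (gw x) (b x) : ℝ)| := le_abs_self _
        _ = |w x| * |(inner ℝ (gw x) (b x) : ℝ)| := abs_mul _ _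
        _ ≤ |w x| * (‖gw x‖ * ‖b x‖) :=
            mul_le_mul_of_nonneg_left (abs_real_inner_le_norm _ _) (abs_nonneg _)
        _ ≤ |w x| * (‖gw x‖ * B) := by
            refine mul_le_mul_of_nonneg_left ?_ (abs_nonneg _)
            exact mul_le_mul_of_nonneg_left (hb_bd x) (norm_nonneg _)
        _ = B * (|w x| * ‖gw x‖) := by ring
    have hyoung : B * (|w x| * ‖gw x‖) ≤ q₀ / 2 * ‖gw x‖ ^ 2 + B ^ 2 / (2 * q₀) * w x ^ 2 := by
      have key : 2 * q₀ * (B * (|w x| * ‖gw x‖)) ≤ q₀ ^ 2 * ‖gw x‖ ^ 2 + B ^ 2 * w x ^ 2 := by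
        nlinarith [sq_nonneg (q₀ * ‖gw x‖ - B * |w x|), sq_abs (w x)]
      have heq : q₀ / 2 * ‖gw x‖ ^ 2 + B ^ 2 / (2 * q₀) * w x ^ 2
          = (q₀ ^ 2 * ‖gw x‖ ^ 2 + B ^ 2 * w x ^ 2) / (2 * q₀) := by
        field_simp
      rw [heq, le_div_iff₀ (by positivity : (0:ℝ) < 2 * q₀)]
      ring_nf
      ring_nf at key
      linarith
    have hmu2 : B ^ 2 / (2 * q₀) * w x ^ 2 ≤ μ / 2 * w x ^ 2 := by
      refine mul_le_mul_of_nonneg_right ?_ (sq_nonneg _)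
      rw [div_le_div_iff₀ (by positivity) (by norm_num)]
      rw [div_le_iff₀ hq₀] at hμB
      ring_nf
      ring_nf at hμB
      linarith
    have hTx : T x = q x * ‖gw x‖ ^ 2 - w x * (inner ℝ (gw x) (b x) : ℝ)
        + (c x + μ) * w x ^ 2 := rfl
    rw [hTx]
    linarith
  -- pointwise upper bound for g w
  have huppt : ∀ x, g x * w x ≤ 1 / (2 * μ) * g x ^ 2 + μ / 2 * w x ^ 2 := by
    intro x
    have key : 2 * μ * (g x * w x) ≤ g x ^ 2 + μ ^ 2 * w x ^ 2 := by
      nlinarith [sq_nonneg (g x - μ * w x)]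
    have h2μ : (0:ℝ) < 2 * μ := by positivity
    calc g x * w x ≤ (g x ^ 2 + μ ^ 2 * w x ^ 2) / (2 * μ) := by
          rw [le_div_iff₀ h2μ]
          ring_nf
          ring_nf at key
          linarith
      _ = 1 / (2 * μ) * g x ^ 2 + μ / 2 * w x ^ 2 := by
          field_simp
  -- integrate the bounds
  have intLow : Integrable (fun x => q₀ / 2 * ‖gw x‖ ^ 2 + μ / 2 * w x ^ 2) :=
    (intE.const_mul _).add (intW2.const_mul _)
  have intUp : Integrable (fun x => 1 / (2 * μ) * g x ^ 2 + μ / 2 * w x ^ 2) :=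
    (intG2.const_mul _).add (intW2.const_mul _)
  have hlow : q₀ / 2 * (∫ x, ‖gw x‖ ^ 2) + μ / 2 * (∫ x, w x ^ 2) ≤ ∫ x, T x := by
    have := integral_mono intLow intT hlowpt
    rwa [integral_add (intE.const_mul _) (intW2.const_mul _), integral_const_mul,
      integral_const_mul] at this
  have hup : (∫ x, T x) ≤ 1 / (2 * μ) * (∫ x, g x ^ 2) + μ / 2 * (∫ x, w x ^ 2) := by
    rw [← hID]
    have := integral_mono intGW intUp huppt
    rwa [integral_add (intG2.const_mul _) (intW2.const_mul _), integral_const_mul,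
      integral_const_mul] at this
  have hG2nonneg : 0 ≤ ∫ x, g x ^ 2 := integral_nonneg fun x => sq_nonneg _
  have hEnonneg : 0 ≤ ∫ x, ‖gw x‖ ^ 2 := integral_nonneg fun x => sq_nonneg _
  have hmain : q₀ * μ * (∫ x, ‖gw x‖ ^ 2) ≤ ∫ x, g x ^ 2 := by
    have hcomb : q₀ / 2 * (∫ x, ‖gw x‖ ^ 2) ≤ 1 / (2 * μ) * (∫ x, g x ^ 2) := by linarith
    have := mul_le_mul_of_nonneg_left hcomb (le_of_lt (by positivity : (0:ℝ) < 2 * μ))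
    have h2μne : (2 * μ) ≠ 0 := by positivity
    have heq : 2 * μ * (1 / (2 * μ) * (∫ x, g x ^ 2)) = ∫ x, g x ^ 2 := by
      rw [← mul_assoc, mul_one_div, div_self h2μne, one_mul]
    rw [heq] at this
    have heq2 : 2 * μ * (q₀ / 2 * ∫ x, ‖gw x‖ ^ 2) = q₀ * μ * ∫ x, ‖gw x‖ ^ 2 := by ring
    linarith
  have hfinal : (∫ x, ‖gw x‖ ^ 2) ≤ 1 / (q₀ * μ) * (∫ x, g x ^ 2) := by
    rw [div_mul_eq_mul_div, one_mul, le_div_iff₀ (by positivity : (0:ℝ) < q₀ * μ)]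
    have heq3 : (∫ x, ‖gw x‖ ^ 2) * (q₀ * μ) = q₀ * μ * ∫ x, ‖gw x‖ ^ 2 := by ring
    linarith
  calc (∫ x, ‖gw x‖ ^ 2) ≤ 1 / (q₀ * μ) * (∫ x, g x ^ 2) := hfinal
    _ ≤ (5 * (1 + 4 * (B' ^ 2 + c₁ ^ 2)) / (q₀ * μ)) * ∫ x, (g x) ^ 2 := by
        refine mul_le_mul_of_nonneg_right ?_ hG2nonneg
        have h15 : (1:ℝ) ≤ 5 * (1 + 4 * (B' ^ 2 + c₁ ^ 2)) := by
          nlinarith [sq_nonneg B', sq_nonneg c₁]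
        rw [div_le_div_iff₀ (by positivity) (by positivity)]
        have := mul_le_mul_of_nonneg_right h15 (le_of_lt (mul_pos hq₀ hμpos))
        linarith
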